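/- β-reduction on the resource λ-calculus with coefficients in ℕ is strongly normalizing: there is no infinite sequence of →β reduction steps starting from any element of ℕ⟨Δ⟩. -/

import Mathlib

/-!
A β-step replaces one summand `s` by a finite sum of simple terms, each strictly smaller than `s`:
the summands of `∂_x(s, T)` arise from `s` by replacing occurrences of `x` (of size one) by
elements of `T`, so they have size at most `|s| + |T| < |⟨λx.s⟩T|`. Hence the multiset of the
sizes of the summands, counted with multiplicity, decreases in the Dershowitz–Manna order, which
is well founded on multisets of natural numbers.
-/

set_option maxHeartbeats 1000000

noncomputable section
open scoped Classical

/-- Simple terms of the resource λ-calculus.  The argument of an application is a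
finite multiset of simple terms (a simple poly-term), represented as a `List`
(read up to permutation).  The syntax is enriched with the constant `c0`. -/
inductive RTerm : Type
  | var : ℕ → RTerm
  | lam : ℕ → RTerm → RTerm
  | app : RTerm → List RTerm → RTerm
  | c0  : RTerm

/-- `deg x s` is the number of (free) occurrences of the variable `x` in `s`. -/
def RTerm.deg (x : ℕ) : RTerm → ℕ
  | .var y => if y = x then 1 else 0
  | .lam y t => if y = x then 0 else t.deg x
  | .app t T => t.deg x + (T.attach.map (fun u => u.1.deg x)).sum
  | .c0 => 0
decreasing_by all_goals (try simp_wf) <;> first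
  | (have := List.sizeOf_lt_of_mem u.2; omega)
  | omega

/-- Simultaneous substitution of (optional) terms for variables. -/
def RTerm.msubst (σ : ℕ → Option RTerm) : RTerm → RTerm
  | .var y => (σ y).getD (.var y)
  | .lam y t => .lam y (t.msubst (fun z => if z = y then none else σ z))
  | .app t T => .app (t.msubst σ) (T.attach.map (fun u => u.1.msubst σ))
  | .c0 => .c0
decreasing_by all_goals (try simp_wf) <;> first
  | (have := List.sizeOf_lt_of_mem u.2; omega)
  | omega

/-- `subst x u t` is `t[u/x]`. -/
def RTerm.subst (x : ℕ) (u : RTerm) (t : RTerm) : RTerm :=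
  t.msubst (fun y => if y = x then some u else none)

/-- Size of a simple term. -/
def RTerm.size : RTerm → ℕ
  | .var _ => 1
  | .lam _ t => t.size + 1
  | .app t T => t.size + (T.attach.map (fun u => u.1.size)).sum + 1
  | .c0 => 1
decreasing_by all_goals (try simp_wf) <;> first
  | (have := List.sizeOf_lt_of_mem u.2; omega)
  | omega

end
noncomputable section
open scoped Classical

-- One-step linear derivative: `rderiv x u s` is the formal sum (with
-- ℕ-coefficients) of all the ways of replacing exactly one occurrence of `x`
-- in `s` by `u`.
mutual
def rderiv (x : ℕ) (u : RTerm) : RTerm → (RTerm →₀ ℕ)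
  | .var y => if y = x then Finsupp.single u 1 else 0
  | .lam y t => if y = x then 0 else (rderiv x u t).mapDomain (RTerm.lam y)
  | .app t T => (rderiv x u t).mapDomain (fun s => RTerm.app s T)
      + (rderivList x u T).mapDomain (RTerm.app t)
  | .c0 => 0

def rderivList (x : ℕ) (u : RTerm) : List RTerm → (List RTerm →₀ ℕ)
  | [] => 0
  | t :: T => (rderiv x u t).mapDomain (· :: T) + (rderivList x u T).mapDomain (t :: ·)
end

/-- Linear extension of `rderiv` to formal sums. -/
def rderivC (x : ℕ) (u : RTerm) (𝒮 : RTerm →₀ ℕ) : RTerm →₀ ℕ :=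
  𝒮.sum (fun t n => n • rderiv x u t)

/-- The linear substitution `∂_x(s, t₁⋯tₙ)`: iterated linear derivative of `s`
at `x` along the elements of `T`, keeping only the terms in which all
occurrences of `x` have been consumed (it is `0` unless `deg x s = T.length`,
assuming the usual convention that `x` is not free in the elements of `T`). -/
def rsub (x : ℕ) (T : List RTerm) (s : RTerm) : RTerm →₀ ℕ :=
  (T.foldl (fun 𝒮 u => rderivC x u 𝒮) (Finsupp.single s 1)).filter
    (fun t => t.deg x = 0)

/-- Linear extension of `∂_x` to formal sums in the first argument. -/
def rsubC (x : ℕ) (𝒮 : RTerm →₀ ℕ) (T : List RTerm) : RTerm →₀ ℕ :=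
  𝒮.sum fun s n => n • rsub x T s

end
noncomputable section
open scoped Classical

/-- One-step β-reduction from a simple term to a formal sum:
the redex rule `⟨λx.s⟩T →β ∂_x(s,T)` closed under the contextual rules. -/
inductive Step : RTerm → (RTerm →₀ ℕ) → Prop
  | redex (x : ℕ) (s : RTerm) (T : List RTerm) :
      Step (.app (.lam x s) T) (rsub x T s)
  | appL {s : RTerm} {𝒮 : RTerm →₀ ℕ} (T : List RTerm) :
      Step s 𝒮 → Step (.app s T) (𝒮.mapDomain (fun v => .app v T))
  | appR {s : RTerm} {𝒮 : RTerm →₀ ℕ} (u : RTerm) (T₁ T₂ : List RTerm) :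
      Step s 𝒮 →
        Step (.app u (T₁ ++ s :: T₂)) (𝒮.mapDomain (fun v => .app u (T₁ ++ v :: T₂)))
  | lam {s : RTerm} {𝒮 : RTerm →₀ ℕ} (x : ℕ) :
      Step s 𝒮 → Step (.lam x s) (𝒮.mapDomain (.lam x))

/-- β-reduction on formal ℕ-linear combinations of simple terms:
`s + u →β 𝒮 + u` whenever `s →β 𝒮`. -/
inductive RStep : (RTerm →₀ ℕ) → (RTerm →₀ ℕ) → Prop
  | mk {s : RTerm} {𝒮 U : RTerm →₀ ℕ} :
      Step s 𝒮 → RStep (Finsupp.single s 1 + U) (𝒮 + U)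

/-- An element of `ℕ⟨Δ⟩` is β-normal when no `→β` step applies to it. -/
def RNormal (a : RTerm →₀ ℕ) : Prop := ∀ b, ¬ RStep a b

end

def listSize (T : List RTerm) : ℕ := (T.map RTerm.size).sum

@[simp]
lemma listSize_nil : listSize [] = 0 := rfl

@[simp]
lemma listSize_cons (t : RTerm) (T : List RTerm) :
    listSize (t :: T) = t.size + listSize T := List.sum_cons

@[simp]
lemma listSize_append (T₁ T₂ : List RTerm) :
    listSize (T₁ ++ T₂) = listSize T₁ + listSize T₂ := by
  simp [listSize]

namespace RTerm

@[simp]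
lemma size_var (y : ℕ) : (var y).size = 1 := by rw [size]

@[simp]
lemma size_lam (y : ℕ) (t : RTerm) : (lam y t).size = t.size + 1 := by rw [size]

@[simp]
lemma size_app (t : RTerm) (T : List RTerm) : (app t T).size = t.size + listSize T + 1 := by
  rw [size]; simp [listSize]

end RTerm

lemma forall_mem_support_mapDomain {α β M : Type*} [AddCommMonoid M] {f : α → β}
    {F : α →₀ M} {p : β → Prop} (h : ∀ a ∈ F.support, p (f a)) :
    ∀ b ∈ (F.mapDomain f).support, p b := by
  classical
  intro b hb
  obtain ⟨a, ha, rfl⟩ := Finset.mem_image.1 (Finsupp.mapDomain_support hb)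
  exact h a ha

lemma forall_mem_support_add {α M : Type*} [AddCommMonoid M] {F G : α →₀ M} {p : α → Prop}
    (hF : ∀ a ∈ F.support, p a) (hG : ∀ a ∈ G.support, p a) :
    ∀ a ∈ (F + G).support, p a := by
  classical
  intro a ha
  exact (Finset.mem_union.1 (Finsupp.support_add ha)).elim (hF a) (hG a)

mutual
lemma size_lt_of_mem_support_rderiv (x : ℕ) (u : RTerm) :
    ∀ t : RTerm, ∀ t' ∈ (rderiv x u t).support, t'.size < t.size + u.size
  | .var y => by
      rw [rderiv]
      split_ifs <;> simp
  | .lam y t => by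
      rw [rderiv]
      split_ifs
      · simp
      · refine forall_mem_support_mapDomain fun a ha => ?_
        have := size_lt_of_mem_support_rderiv x u t a ha
        simp only [RTerm.size_lam]
        omega
  | .app t T => by
      rw [rderiv]
      refine forall_mem_support_add (forall_mem_support_mapDomain fun a ha => ?_)
        (forall_mem_support_mapDomain fun A hA => ?_)
      · have := size_lt_of_mem_support_rderiv x u t a ha
        simp only [RTerm.size_app]
        omega
      · have := listSize_lt_of_mem_support_rderivList x u T A hA
        simp only [RTerm.size_app]
        omega
  | .c0 => by simp [rderiv]

lemma listSize_lt_of_mem_support_rderivList (x : ℕ) (u : RTerm) :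
    ∀ T : List RTerm, ∀ T' ∈ (rderivList x u T).support, listSize T' < listSize T + u.size
  | [] => by simp [rderivList]
  | t :: T => by
      rw [rderivList]
      refine forall_mem_support_add (forall_mem_support_mapDomain fun a ha => ?_)
        (forall_mem_support_mapDomain fun A hA => ?_)
      · have := size_lt_of_mem_support_rderiv x u t a ha
        simp only [listSize_cons]
        omega
      · have := listSize_lt_of_mem_support_rderivList x u T A hA
        simp only [listSize_cons]
        omega
end

lemma size_le_of_mem_support_rderivC {x : ℕ} {u : RTerm} {B : ℕ} {F : RTerm →₀ ℕ}
    (hF : ∀ t ∈ F.support, t.size ≤ B) :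
    ∀ t' ∈ (rderivC x u F).support, t'.size ≤ B + u.size := by
  classical
  intro t' ht'
  obtain ⟨a, ha, hmem⟩ := Finset.mem_biUnion.1 (Finsupp.support_sum ht')
  have := size_lt_of_mem_support_rderiv x u a t' (Finsupp.support_smul hmem)
  have := hF a ha
  omega

lemma size_le_of_mem_support_foldl_rderivC (x : ℕ) (T : List RTerm) {B : ℕ}
    {F : RTerm →₀ ℕ} (hF : ∀ t ∈ F.support, t.size ≤ B) :
    ∀ t ∈ (T.foldl (fun 𝒮 u => rderivC x u 𝒮) F).support, t.size ≤ B + listSize T := by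
  induction T generalizing F B with
  | nil => simpa using hF
  | cons u T ih =>
      intro t ht
      have := ih (size_le_of_mem_support_rderivC hF) t ht
      simp only [listSize_cons]
      omega

lemma size_le_of_mem_support_rsub (x : ℕ) (T : List RTerm) (s : RTerm) :
    ∀ t ∈ (rsub x T s).support, t.size ≤ s.size + listSize T := by
  intro t ht
  rw [rsub, Finsupp.support_filter, Finset.mem_filter] at ht
  refine size_le_of_mem_support_foldl_rderivC x T (fun a ha => ?_) t ht.1
  rw [(Finsupp.mem_support_single _ _ _).1 ha |>.1]

lemma Step.size_lt {s : RTerm} {𝒮 : RTerm →₀ ℕ} (h : Step s 𝒮) :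
    ∀ t ∈ 𝒮.support, t.size < s.size := by
  induction h with
  | redex x s T =>
      intro t ht
      have := size_le_of_mem_support_rsub x T s t ht
      simp only [RTerm.size_app, RTerm.size_lam]
      omega
  | appL T _ ih =>
      refine forall_mem_support_mapDomain fun a ha => ?_
      have := ih a ha
      simp only [RTerm.size_app]
      omega
  | appR u T₁ T₂ _ ih =>
      refine forall_mem_support_mapDomain fun a ha => ?_
      have := ih a ha
      simp only [RTerm.size_app, listSize_append, listSize_cons]
      omega
  | lam x _ ih =>
      refine forall_mem_support_mapDomain fun a ha => ?_
      have := ih a ha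
      simp only [RTerm.size_lam]
      omega

open Classical in
noncomputable def sizeMultiset (F : RTerm →₀ ℕ) : Multiset ℕ :=
  (Finsupp.toMultiset F).map RTerm.size

lemma RStep.sizeMultiset_lt {A B : RTerm →₀ ℕ} (h : RStep A B) :
    Multiset.IsDershowitzMannaLT (sizeMultiset B) (sizeMultiset A) := by
  obtain @⟨s, 𝒮, U, hstep⟩ := h
  refine ⟨sizeMultiset U, sizeMultiset 𝒮, {s.size}, by simp, by simp [sizeMultiset, add_comm],
    by simp [sizeMultiset, add_comm], fun y hy => ⟨s.size, Multiset.mem_singleton_self _, ?_⟩⟩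
  obtain ⟨t, ht, rfl⟩ := Multiset.mem_map.1 hy
  exact hstep.size_lt t ((Finsupp.mem_toMultiset 𝒮 t).1 ht)

lemma wellFounded_flip_RStep : WellFounded (flip RStep) :=
  Subrelation.wf RStep.sizeMultiset_lt
    (InvImage.wf sizeMultiset Multiset.wellFounded_isDershowitzMannaLT)

/-- **Strong normalization of β-reduction on the resource λ-calculus over ℕ**:
there is no infinite sequence of `→β` steps starting from an element of `ℕ⟨Δ⟩`. -/
theorem RStep_strongly_normalizing :
    ¬ ∃ f : ℕ → (RTerm →₀ ℕ), ∀ n, RStep (f n) (f (n + 1)) := by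
  rintro ⟨f, hf⟩
  exact (wellFounded_iff_isEmpty_descending_chain.1 wellFounded_flip_RStep).false ⟨f, hf⟩
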